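/- Let f_1, f_2 be random variables (encoder outputs), and s_{3k-1}, s_{3k}, s_{3k+1}, s_{3k+2} be sources with the Markov property s_{3k-1} → s_{3k} → s_{3k+1} → s_{3k+2}. Suppose H(s_{3k+2} | f_1, f_2, s_{3k-1}) ≤ nε and H(s_{3k+1} | f_1, s_{3k}) ≤ nε. Then H(f_1, f_2) ≥ H(s_{3k+2} | s_{3k-1}) + H(s_{3k+1} | s_{3k+2}, s_{3k}) − 2nε. -/

import Mathlib

open Finset

variable {Ω : Type} [Fintype Ω]

/-- Probability that the random variable `X` takes value `x`, under weights `μ`. -/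
noncomputable def pr (μ : Ω → ℝ) {α : Type} [Fintype α] [DecidableEq α]
    (X : Ω → α) (x : α) : ℝ :=
  ∑ ω, if X ω = x then μ ω else 0

/-- Shannon entropy (base 2) of the random variable `X`. -/
noncomputable def ent (μ : Ω → ℝ) {α : Type} [Fintype α] [DecidableEq α]
    (X : Ω → α) : ℝ :=
  -∑ x, pr μ X x * Real.logb 2 (pr μ X x)

/-- Conditional Shannon entropy `H(X | Y) = H(X, Y) - H(Y)`. -/
noncomputable def centr (μ : Ω → ℝ) {α β : Type} [Fintype α] [DecidableEq α]
    [Fintype β] [DecidableEq β] (X : Ω → α) (Y : Ω → β) : ℝ :=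
  ent μ (fun ω => (X ω, Y ω)) - ent μ Y

/-- Conditional mutual information `I(X ; Y | Z) = H(X|Z) + H(Y|Z) - H(X,Y|Z)`. -/
noncomputable def mi (μ : Ω → ℝ) {α β γ : Type} [Fintype α] [DecidableEq α]
    [Fintype β] [DecidableEq β] [Fintype γ] [DecidableEq γ]
    (X : Ω → α) (Y : Ω → β) (Z : Ω → γ) : ℝ :=
  centr μ X Z + centr μ Y Z - centr μ (fun ω => (X ω, Y ω)) Z

/-- `μ` is a probability mass function on `Ω`. -/
structure IsPMF (μ : Ω → ℝ) : Prop where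
  nonneg : ∀ ω, 0 ≤ μ ω
  sum_one : ∑ ω, μ ω = 1

/-!
Condition on `s_{3k-1}`. Expanding `H(f₁,f₂,s_{3k+2} | s_{3k-1})` by the chain rule in both orders
gives `H(f₁,f₂ | s_{3k-1}) = H(s_{3k+2} | s_{3k-1}) - H(s_{3k+2} | f₁,f₂,s_{3k-1})
+ H(f₁,f₂ | s_{3k+2},s_{3k-1})`, where the middle term is a Fano term. The last term is at least
`H(f₁ | W)` with `W = (s_{3k+2}, s_{3k-1}, s_{3k})`, and the same expansion of
`H(f₁,s_{3k+1} | W)` bounds that below by `H(s_{3k+1} | W)` minus the second Fano term. Finally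
the Markov property lets `s_{3k-1}` be dropped from `W`. Besides the chain rule, the only
inequality needed is that conditioning reduces entropy, which comes from Gibbs' inequality.
-/
variable {μ : Ω → ℝ} {α β γ : Type} [Fintype α] [DecidableEq α]
  [Fintype β] [DecidableEq β] [Fintype γ] [DecidableEq γ]

lemma pr_nonneg (hμ : IsPMF μ) (X : Ω → α) (x : α) : 0 ≤ pr μ X x :=
  sum_nonneg fun ω _ => by split_ifs <;> simp [hμ.nonneg ω]

lemma sum_pr (hμ : IsPMF μ) (X : Ω → α) : ∑ x, pr μ X x = 1 := by
  unfold pr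
  rw [← hμ.sum_one, sum_comm]
  simp

lemma pr_comp (T : Ω → α) (g : α → β) (b : β) :
    pr μ (fun ω => g (T ω)) b = ∑ a, if g a = b then pr μ T a else 0 := by
  simp only [pr, ite_sum_zero]
  rw [sum_comm]
  refine sum_congr rfl fun ω _ => ?_
  rw [sum_eq_single (T ω)] <;> aesop

lemma pr_le_pr_comp (hμ : IsPMF μ) (T : Ω → α) (g : α → β) (a : α) :
    pr μ T a ≤ pr μ (fun ω => g (T ω)) (g a) := by
  rw [pr_comp T g]
  calc pr μ T a = if g a = g a then pr μ T a else 0 := (if_pos rfl).symm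
    _ ≤ _ := single_le_sum (f := fun a' => if g a' = g a then pr μ T a' else 0)
        (fun a' _ => by split_ifs <;> simp [pr_nonneg hμ]) (mem_univ a)

lemma pr_comp_of_injective {g : α → β} (hg : g.Injective) (T : Ω → α) (a : α) :
    pr μ (fun ω => g (T ω)) (g a) = pr μ T a := by
  rw [pr_comp T g, sum_eq_single a (fun a' _ ha' => if_neg (hg.ne ha')) (by simp)]
  simp

lemma sum_pr_prod_mk (Y : Ω → β) (Z : Ω → γ) (c : γ) :
    ∑ b, pr μ (fun ω => (Y ω, Z ω)) (b, c) = pr μ Z c := by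
  simp only [pr, Prod.mk.injEq, ite_and]
  rw [sum_comm]
  simp

lemma ent_comp_eq_sum (T : Ω → α) (g : α → β) :
    ent μ (fun ω => g (T ω))
      = -∑ a, pr μ T a * Real.logb 2 (pr μ (fun ω => g (T ω)) (g a)) := by
  rw [ent, neg_inj]
  conv_lhs => enter [2, b, 1]; rw [pr_comp T g b]
  simp only [sum_mul, ite_mul, zero_mul]
  rw [sum_comm]
  refine sum_congr rfl fun a _ => ?_
  rw [sum_ite_eq, if_pos (mem_univ _)]

lemma ent_comp_le (hμ : IsPMF μ) (T : Ω → α) (g : α → β) :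
    ent μ (fun ω => g (T ω)) ≤ ent μ T := by
  rw [ent_comp_eq_sum, ent, neg_le_neg_iff]
  refine sum_le_sum fun a _ => ?_
  rcases (pr_nonneg hμ T a).eq_or_lt with h | h
  · simp [← h]
  · exact mul_le_mul_of_nonneg_left
      (Real.logb_le_logb_of_le one_lt_two h (pr_le_pr_comp hμ T g a)) h.le

lemma ent_comp_of_injective (T : Ω → α) {g : α → β} (hg : g.Injective) :
    ent μ (fun ω => g (T ω)) = ent μ T := by
  simp_rw [ent_comp_eq_sum, pr_comp_of_injective hg, ent]

lemma centr_nonneg (hμ : IsPMF μ) (X : Ω → α) (Y : Ω → β) : 0 ≤ centr μ X Y :=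
  sub_nonneg.2 (ent_comp_le hμ (fun ω => (X ω, Y ω)) Prod.snd)

lemma centr_comp_left_le (hμ : IsPMF μ) (g : α → γ) (X : Ω → α) (W : Ω → β) :
    centr μ (fun ω => g (X ω)) W ≤ centr μ X W :=
  sub_le_sub_right (ent_comp_le hμ (fun ω => (X ω, W ω)) fun p => (g p.1, p.2)) _

lemma centr_prod_left (X : Ω → α) (Y : Ω → β) (Z : Ω → γ) :
    centr μ (fun ω => (X ω, Y ω)) Z
      = centr μ X (fun ω => (Y ω, Z ω)) + centr μ Y Z := by
  have hassoc : ent μ (fun ω => ((X ω, Y ω), Z ω)) = ent μ (fun ω => (X ω, Y ω, Z ω)) :=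
    ent_comp_of_injective (fun ω => (X ω, Y ω, Z ω)) (g := fun t => ((t.1, t.2.1), t.2.2))
      (Equiv.prodAssoc α β γ).symm.injective
  simp only [centr, hassoc]
  ring

/-- Gibbs' inequality, for a sub-probability vector `q`. -/
lemma sum_mul_logb_div_nonneg {ι : Type} [Fintype ι] {p q : ι → ℝ} (hp : ∀ i, 0 ≤ p i)
    (hq : ∀ i, 0 ≤ q i) (hpq : ∀ i, 0 < p i → 0 < q i) (hsum : ∑ i, q i ≤ ∑ i, p i) :
    0 ≤ ∑ i, p i * Real.logb 2 (p i / q i) := by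
  have hlog2 : 0 < Real.log 2 := Real.log_pos one_lt_two
  have hterm : ∀ i, (p i - q i) / Real.log 2 ≤ p i * Real.logb 2 (p i / q i) := by
    intro i
    rcases (hp i).eq_or_lt with h | h
    · rw [← h, zero_sub, zero_mul, neg_div]
      exact neg_nonpos.2 (div_nonneg (hq i) hlog2.le)
    · have hlog := Real.one_sub_inv_le_log_of_pos (div_pos h (hpq i h))
      rw [inv_div] at hlog
      rw [Real.logb, mul_div_assoc', div_le_div_iff_of_pos_right hlog2]
      calc p i - q i = p i * (1 - q i / p i) := by
            rw [mul_sub, mul_div_cancel₀ _ h.ne', mul_one]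
        _ ≤ p i * Real.log (p i / q i) := mul_le_mul_of_nonneg_left hlog h.le
  calc 0 ≤ (∑ i, p i - ∑ i, q i) / Real.log 2 := div_nonneg (by linarith) hlog2.le
    _ = ∑ i, (p i - q i) / Real.log 2 := by rw [← sum_sub_distrib, sum_div]
    _ ≤ _ := sum_le_sum fun i _ => hterm i

lemma mi_nonneg (hμ : IsPMF μ) (X : Ω → α) (Y : Ω → β) (Z : Ω → γ) : 0 ≤ mi μ X Y Z := by
  set T : Ω → α × β × γ := fun ω => (X ω, Y ω, Z ω)
  set pXZ := pr μ (fun ω => (X ω, Z ω))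
  set pYZ := pr μ (fun ω => (Y ω, Z ω))
  -- the law under which `X` and `Y` are conditionally independent given `Z`
  set q : α × β × γ → ℝ := fun t => pXZ (t.1, t.2.2) * pYZ (t.2.1, t.2.2) / pr μ Z t.2.2
  have hXZ := pr_le_pr_comp hμ T fun t => (t.1, t.2.2)
  have hYZ := pr_le_pr_comp hμ T fun t => (t.2.1, t.2.2)
  have hZ := pr_le_pr_comp hμ T fun t => t.2.2
  have hmi : mi μ X Y Z = ∑ t, pr μ T t * Real.logb 2 (pr μ T t / q t) := by
    have hXYZ : ent μ (fun ω => ((X ω, Y ω), Z ω)) = ent μ T :=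
      ent_comp_of_injective T (g := fun t => ((t.1, t.2.1), t.2.2))
        (Equiv.prodAssoc α β γ).symm.injective
    have hentXZ : ent μ (fun ω => (X ω, Z ω))
        = -∑ t, pr μ T t * Real.logb 2 (pXZ (t.1, t.2.2)) :=
      ent_comp_eq_sum T fun t => (t.1, t.2.2)
    have hentYZ : ent μ (fun ω => (Y ω, Z ω))
        = -∑ t, pr μ T t * Real.logb 2 (pYZ (t.2.1, t.2.2)) :=
      ent_comp_eq_sum T fun t => (t.2.1, t.2.2)
    have hentZ : ent μ Z = -∑ t, pr μ T t * Real.logb 2 (pr μ Z t.2.2) :=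
      ent_comp_eq_sum T fun t => t.2.2
    have hterm : ∀ t, pr μ T t * Real.logb 2 (pr μ T t / q t)
        = pr μ T t * (Real.logb 2 (pr μ T t) + Real.logb 2 (pr μ Z t.2.2)
          - Real.logb 2 (pXZ (t.1, t.2.2)) - Real.logb 2 (pYZ (t.2.1, t.2.2))) := by
      intro t
      rcases (pr_nonneg hμ T t).eq_or_lt with h | h
      · simp [← h]
      · have hXZt := h.trans_le (hXZ t)
        have hYZt := h.trans_le (hYZ t)
        have hZt := h.trans_le (hZ t)
        rw [Real.logb_div h.ne' (by positivity), Real.logb_div (by positivity) hZt.ne',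
          Real.logb_mul hXZt.ne' hYZt.ne']
        ring
    rw [mi, centr, centr, centr, hXYZ, hentXZ, hentYZ, hentZ,
      sum_congr rfl fun t _ => hterm t]
    simp only [ent, mul_add, mul_sub, sum_add_distrib, sum_sub_distrib]
    ring
  have hsum : ∑ t, q t ≤ ∑ t, pr μ T t := by
    calc ∑ t, q t = ∑ x, ∑ z, pXZ (x, z) * (∑ y, pYZ (y, z)) / pr μ Z z := by
          rw [Fintype.sum_prod_type]
          refine sum_congr rfl fun x _ => ?_
          rw [Fintype.sum_prod_type, sum_comm]
          simp only [q, mul_sum, sum_div]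
      _ ≤ ∑ x, ∑ z, pXZ (x, z) := by
          gcongr with x _ z _
          rw [sum_pr_prod_mk]
          rcases eq_or_ne (pr μ Z z) 0 with h | h
          · simp [h, pXZ, pr_nonneg hμ]
          · rw [mul_div_cancel_right₀ _ h]
      _ = ∑ t, pr μ T t := by rw [← Fintype.sum_prod_type', sum_pr hμ, sum_pr hμ]
  rw [hmi]
  exact sum_mul_logb_div_nonneg (pr_nonneg hμ T)
    (fun t => div_nonneg (mul_nonneg (pr_nonneg hμ _ _) (pr_nonneg hμ _ _)) (pr_nonneg hμ _ _))
    (fun t ht => div_pos (mul_pos (ht.trans_le (hXZ t)) (ht.trans_le (hYZ t)))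
      (ht.trans_le (hZ t))) hsum

lemma centr_prod_right_le (hμ : IsPMF μ) (X : Ω → α) (Y : Ω → β) (Z : Ω → γ) :
    centr μ X (fun ω => (Y ω, Z ω)) ≤ centr μ X Z := by
  have h := mi_nonneg hμ X Y Z
  rw [mi, centr_prod_left] at h
  linarith

lemma centr_le_centr_comp (hμ : IsPMF μ) (X : Ω → α) (W : Ω → β) (g : β → γ) :
    centr μ X W ≤ centr μ X (fun ω => g (W ω)) := by
  have hgraph : centr μ X (fun ω => (W ω, g (W ω))) = centr μ X W := by
    have hXW : ent μ (fun ω => (X ω, W ω, g (W ω))) = ent μ (fun ω => (X ω, W ω)) :=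
      ent_comp_of_injective (fun ω => (X ω, W ω)) (g := fun p => (p.1, p.2, g p.2))
        fun p p' h => by simp_all [Prod.ext_iff]
    have hW : ent μ (fun ω => (W ω, g (W ω))) = ent μ W :=
      ent_comp_of_injective W (g := fun w => (w, g w)) fun w w' h => (Prod.ext_iff.1 h).1
    rw [centr, centr, hXW, hW]
  exact hgraph ▸ centr_prod_right_le hμ X W _

lemma centr_le_ent (hμ : IsPMF μ) (X : Ω → α) (W : Ω → β) : centr μ X W ≤ ent μ X := by
  have hX : ent μ (fun ω => (X ω, ())) = ent μ X :=
    ent_comp_of_injective X (g := fun a => (a, ())) fun a a' h => (Prod.ext_iff.1 h).1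
  have hunit : ent μ (fun _ : Ω => ()) = 0 := by simp [ent, pr, hμ.sum_one]
  calc centr μ X W ≤ centr μ X (fun _ => ()) := centr_le_centr_comp hμ X W fun _ => ()
    _ = ent μ X := by rw [centr, hX, hunit, sub_zero]

lemma centr_add_centr_comm (X : Ω → α) (Y : Ω → β) (W : Ω → γ) :
    centr μ X W + centr μ Y (fun ω => (X ω, W ω))
      = centr μ Y W + centr μ X (fun ω => (Y ω, W ω)) := by
  have hswap : centr μ (fun ω => (Y ω, X ω)) W = centr μ (fun ω => (X ω, Y ω)) W := by
    have h : ent μ (fun ω => ((Y ω, X ω), W ω)) = ent μ (fun ω => ((X ω, Y ω), W ω)) :=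
      ent_comp_of_injective (fun ω => ((X ω, Y ω), W ω)) (g := fun p => (p.1.swap, p.2))
        fun p p' h => by simp_all [Prod.ext_iff]
    rw [centr, centr, h]
  rw [centr_prod_left, centr_prod_left] at hswap
  linarith

lemma centr_eq_of_centr_prod_eq {δ : Type} [Fintype δ] [DecidableEq δ] (hμ : IsPMF μ)
    {A : Ω → α} {B : Ω → β} {C : Ω → γ} {D : Ω → δ}
    (h : centr μ (fun ω => (C ω, D ω)) (fun ω => (A ω, B ω))
      = centr μ (fun ω => (C ω, D ω)) B) :
    centr μ C (fun ω => (D ω, A ω, B ω)) = centr μ C (fun ω => (D ω, B ω)) := by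
  have hC := centr_le_centr_comp hμ C (fun ω => (D ω, A ω, B ω)) fun p => (p.1, p.2.2)
  have hD := centr_prod_right_le hμ D A B
  rw [centr_prod_left, centr_prod_left] at h
  exact le_antisymm hC (by linarith)

theorem multiterminal_sum_rate_lower_bound_general
    {S A1 A2 : Type} [Fintype S] [DecidableEq S]
    [Fintype A1] [DecidableEq A1] [Fintype A2] [DecidableEq A2]
    (μ : Ω → ℝ) (hμ : IsPMF μ) (n ε : ℝ)
    (f1 : Ω → A1) (f2 : Ω → A2) (sA sB sC sD : Ω → S)
    (hM1 : centr μ (fun ω => (sC ω, sD ω)) (fun ω => (sA ω, sB ω))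
        = centr μ (fun ω => (sC ω, sD ω)) sB)
    (hFano2 : centr μ sD (fun ω => (f1 ω, f2 ω, sA ω)) ≤ n * ε)
    (hFano1 : centr μ sC (fun ω => (f1 ω, sB ω)) ≤ n * ε) :
    ent μ (fun ω => (f1 ω, f2 ω))
      ≥ centr μ sD sA + centr μ sC (fun ω => (sD ω, sB ω)) - 2 * n * ε := by
  have hF : centr μ (fun ω => (f1 ω, f2 ω)) sA ≤ ent μ (fun ω => (f1 ω, f2 ω)) :=
    centr_le_ent hμ _ sA
  have hsplitD := centr_add_centr_comm (μ := μ) sD (fun ω => (f1 ω, f2 ω)) sA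
  have hFanoD : centr μ sD (fun ω => ((f1 ω, f2 ω), sA ω)) ≤ n * ε :=
    (centr_le_centr_comp hμ sD (fun ω => ((f1 ω, f2 ω), sA ω))
      fun p => (p.1.1, p.1.2, p.2)).trans hFano2
  have hf1 : centr μ f1 (fun ω => (sD ω, sA ω, sB ω))
      ≤ centr μ (fun ω => (f1 ω, f2 ω)) (fun ω => (sD ω, sA ω)) :=
    (centr_le_centr_comp hμ f1 (fun ω => (sD ω, sA ω, sB ω)) fun p => (p.1, p.2.1)).trans
      (centr_comp_left_le hμ Prod.fst (fun ω => (f1 ω, f2 ω)) _)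
  have hsplitC := centr_add_centr_comm (μ := μ) sC f1 fun ω => (sD ω, sA ω, sB ω)
  have hFanoC : centr μ sC (fun ω => (f1 ω, sD ω, sA ω, sB ω)) ≤ n * ε :=
    (centr_le_centr_comp hμ sC (fun ω => (f1 ω, sD ω, sA ω, sB ω))
      fun p => (p.1, p.2.2.2)).trans hFano1
  have hMarkov := centr_eq_of_centr_prod_eq hμ hM1
  have hf1C := centr_nonneg hμ f1 fun ω => (sC ω, sD ω, sA ω, sB ω)
  linarith

/-- multi-terminal source coding lower bound. With
`sA = s_{3k-1}, sB = s_{3k}, sC = s_{3k+1}, sD = s_{3k+2}` and encoder outputs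
`f₁, f₂`, Fano-type decodability gives
`H(f₁,f₂) ≥ H(sD | sA) + H(sC | sD, sB) − 2nε`. -/
theorem multiterminal_sum_rate_lower_bound
    {S A1 A2 : Type} [Fintype S] [DecidableEq S]
    [Fintype A1] [DecidableEq A1] [Fintype A2] [DecidableEq A2]
    (μ : Ω → ℝ) (hμ : IsPMF μ) (n ε : ℝ) (hn : 0 < n) (hε : 0 ≤ ε)
    (f1 : Ω → A1) (f2 : Ω → A2) (sA sB sC sD : Ω → S)
    (hM1 : centr μ (fun ω => (sC ω, sD ω)) (fun ω => (sA ω, sB ω))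
        = centr μ (fun ω => (sC ω, sD ω)) sB)
    (hM2 : centr μ sD (fun ω => (sA ω, sB ω, sC ω)) = centr μ sD sC)
    (hFano2 : centr μ sD (fun ω => (f1 ω, f2 ω, sA ω)) ≤ n * ε)
    (hFano1 : centr μ sC (fun ω => (f1 ω, sB ω)) ≤ n * ε) :
    ent μ (fun ω => (f1 ω, f2 ω))
      ≥ centr μ sD sA + centr μ sC (fun ω => (sD ω, sB ω)) - 2 * n * ε :=
  multiterminal_sum_rate_lower_bound_general μ hμ n ε f1 f2 sA sB sC sD hM1 hFano2 hFano1
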